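/- Let X₁ and X₂ be independent real random variables with X₁ exponentially distributed with rate λ₁ > 0 and X₂ exponentially distributed with rate λ₂ > 0, and let α ∈ (0,1) and σ² > 0. Then P(X₁ ≤ α(X₂ + σ²) and X₂ ≤ α(X₁ + σ²)) = 1 − (λ₂/(λ₂ + αλ₁))·exp(−αλ₁σ²) − (λ₁/(λ₁ + αλ₂))·exp(−αλ₂σ²) + (λ₁/(λ₁ + αλ₂) + λ₂/(λ₂ + αλ₁) − 1)·exp(−(λ₁ + λ₂)·ασ²/(1−α)). -/

import Mathlib

/-! Let `A = {X₁ > α(X₂ + σ²)}` and `B = {X₂ > α(X₁ + σ²)}`. The event is `Aᶜ ∩ Bᶜ`, so its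
probability is `1 - P(A) - P(B) + P(A ∩ B)`. Conditioning on `X₂ = y` and using the exponential
tail `P(X₁ > x) = e^{-λ₁x}`, `P(A) = E[e^{-λ₁α(X₂ + σ²)}] = λ₂/(λ₂ + αλ₁) e^{-αλ₁σ²}`, and
symmetrically for `B`. Given `X₂ = y`, the event `A ∩ B` asks `X₁ ∈ (α(y + σ²), y/α - σ²)`, an
interval that is nonempty only for `y > t₀ = ασ²/(1 - α)`; its probability is a difference of
two exponential tails, and integrating each against the density of `X₂` over `(t₀, ∞)` produces
the common factor `e^{-(λ₁ + λ₂)t₀}`. -/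

open MeasureTheory ProbabilityTheory Real Set
open scoped ENNReal

section MeasureLemmas

variable {α : Type*} [MeasurableSpace α] {μ : Measure α}

lemma probReal_compl_inter_compl [IsProbabilityMeasure μ] {s t : Set α} (hs : MeasurableSet s)
    (ht : MeasurableSet t) :
    μ.real (sᶜ ∩ tᶜ) = 1 - μ.real s - μ.real t + μ.real (s ∩ t) := by
  rw [← compl_union, probReal_compl_eq_one_sub (hs.union ht)]
  linarith [measureReal_union_add_inter (μ := μ) (s := s) ht]

lemma measure_Ioo_eq_measure_Ioi_sub [IsFiniteMeasure μ] [NullSingletonClass μ] [LinearOrder α]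
    [TopologicalSpace α] [OrderTopology α] [OpensMeasurableSpace α] (u v : α) :
    μ (Ioo u v) = μ (Ioi u) - μ (Ioi v) := by
  rcases le_or_gt v u with hvu | huv
  · rw [Ioo_eq_empty hvu.not_gt, measure_empty,
      tsub_eq_zero_of_le (measure_mono (Ioi_subset_Ioi hvu))]
  · rw [measure_congr Ioo_ae_eq_Ioc, ← Ioi_sdiff_Ioi,
      measure_sdiff (Ioi_subset_Ioi huv.le) measurableSet_Ioi.nullMeasurableSet
        (measure_ne_top _ _)]

lemma lintegral_measure_Ioo_eq_sub {μ ν : Measure ℝ} [IsFiniteMeasure μ] [NullSingletonClass μ]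
    [IsFiniteMeasure ν] {u v : ℝ → ℝ} (hv : Measurable v) {t : ℝ} (hle : ∀ y ≤ t, v y ≤ u y)
    (hge : ∀ y, t < y → u y ≤ v y) :
    ∫⁻ y, μ (Ioo (u y) (v y)) ∂ν
      = ∫⁻ y in Ioi t, μ (Ioi (u y)) ∂ν - ∫⁻ y in Ioi t, μ (Ioi (v y)) ∂ν := by
  have hsupport : (fun y => μ (Ioo (u y) (v y))).support ⊆ Ioi t :=
    Function.support_subset_iff'.mpr fun y hyt => by
      rw [Ioo_eq_empty (hle y (not_lt.mp hyt)).not_gt, measure_empty]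
  have htail : Measurable fun x : ℝ => μ (Ioi x) :=
    Antitone.measurable fun _ _ h => measure_mono (Ioi_subset_Ioi h)
  have hfinite : ∫⁻ y in Ioi t, μ (Ioi (v y)) ∂ν ≠ ∞ := by
    refine ne_top_of_le_ne_top ?_ (lintegral_mono fun y => measure_mono (subset_univ (Ioi (v y))))
    rw [lintegral_const]
    finiteness
  rw [← setLIntegral_eq_of_support_subset hsupport]
  simp_rw [measure_Ioo_eq_measure_Ioi_sub]
  exact lintegral_sub (htail.comp hv) hfinite <|
    ae_restrict_of_forall_mem measurableSet_Ioi fun y hy => measure_mono (Ioi_subset_Ioi (hge y hy))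

end MeasureLemmas

namespace ProbabilityTheory

instance nullSingletonClass_expMeasure (r : ℝ) : NullSingletonClass (expMeasure r) :=
  inferInstanceAs (NullSingletonClass (volume.withDensity (gammaPDF 1 r)))

variable {r s : ℝ}

lemma expMeasure_Iic_zero (hr : 0 < r) : expMeasure r (Iic 0) = 0 := by
  have := isProbabilityMeasure_expMeasure hr
  rw [← ofReal_cdf, cdf_expMeasure_eq hr]
  simp

lemma expMeasure_restrict_Ioi_zero (hr : 0 < r) :
    (expMeasure r).restrict (Ioi 0) = expMeasure r := by
  refine Measure.restrict_eq_self_of_ae_mem (ae_iff.mpr ?_)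
  convert expMeasure_Iic_zero hr using 2
  ext
  simp

lemma expMeasure_Ioi (hr : 0 < r) {t : ℝ} (ht : 0 ≤ t) :
    expMeasure r (Ioi t) = ENNReal.ofReal (rexp (-(r * t))) := by
  have := isProbabilityMeasure_expMeasure hr
  have hexp : rexp (-(r * t)) ≤ 1 := exp_le_one_iff.mpr (by nlinarith)
  rw [← compl_Iic, prob_compl_eq_one_sub measurableSet_Iic, ← ofReal_cdf, cdf_expMeasure_eq hr,
    if_pos ht, ← ENNReal.ofReal_one, ← ENNReal.ofReal_sub _ (by linarith), sub_sub_cancel]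

lemma setLIntegral_expMeasure_Ioi {t : ℝ} (ht : 0 ≤ t) (g : ℝ → ℝ≥0∞) :
    ∫⁻ y in Ioi t, g y ∂expMeasure s
      = ∫⁻ y in Ioi t, ENNReal.ofReal (s * rexp (-(s * y))) * g y := by
  rw [show expMeasure s = volume.withDensity (exponentialPDF s) from rfl,
    restrict_withDensity measurableSet_Ioi,
    lintegral_withDensity_eq_lintegral_mul_non_measurable _
      (show Measurable (exponentialPDF s) from (measurable_exponentialPDFReal s).ennreal_ofReal)
      (ae_of_all _ fun _ => ENNReal.ofReal_lt_top)]
  refine setLIntegral_congr_fun measurableSet_Ioi fun y hy => ?_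
  rw [Pi.mul_apply, exponentialPDF_of_nonneg (ht.trans (le_of_lt hy))]

lemma setLIntegral_expMeasure_Ioi_affine (hr : 0 < r) (hs : 0 < s) {a b t : ℝ} (ha : 0 ≤ a)
    (ht : 0 ≤ t) (hb : 0 ≤ a * t + b) :
    ∫⁻ y in Ioi t, expMeasure r (Ioi (a * y + b)) ∂expMeasure s
      = ENNReal.ofReal (s / (s + a * r) * rexp (-(r * b) - (s + a * r) * t)) := by
  have hk : 0 < s + a * r := by positivity
  have hdensity : ∀ y ∈ Ioi t,
      ENNReal.ofReal (s * rexp (-(s * y))) * expMeasure r (Ioi (a * y + b))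
        = ENNReal.ofReal (s * rexp (-(r * b)) * rexp (-(s + a * r) * y)) := by
    intro y hy
    rw [expMeasure_Ioi hr (by nlinarith [mem_Ioi.mp hy]), ← ENNReal.ofReal_mul (by positivity),
      mul_assoc, mul_assoc, ← exp_add, ← exp_add]
    ring_nf
  rw [setLIntegral_expMeasure_Ioi ht, setLIntegral_congr_fun measurableSet_Ioi hdensity,
    ← ofReal_integral_eq_lintegral_ofReal ((exp_neg_integrableOn_Ioi t hk).const_mul _)
      (ae_of_all _ fun _ => by positivity),
    integral_const_mul, integral_exp_mul_Ioi (by linarith), neg_div_neg_eq, sub_eq_add_neg,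
    exp_add, ← neg_mul]
  congr 1
  field_simp

lemma lintegral_expMeasure_Ioi_affine (hr : 0 < r) (hs : 0 < s) {a b : ℝ} (ha : 0 ≤ a)
    (hb : 0 ≤ b) :
    ∫⁻ y, expMeasure r (Ioi (a * y + b)) ∂expMeasure s
      = ENNReal.ofReal (s / (s + a * r) * rexp (-(r * b))) := by
  rw [← expMeasure_restrict_Ioi_zero hs,
    setLIntegral_expMeasure_Ioi_affine hr hs ha le_rfl (by simpa using hb), mul_zero, sub_zero]

end ProbabilityTheory

section TwoSensors

variable {r s : ℝ}

lemma prod_expMeasure_setOf_lt (hr : 0 < r) (hs : 0 < s) {α c : ℝ} (hα : 0 ≤ α) (hc : 0 ≤ c) :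
    (expMeasure r).prod (expMeasure s) {p | α * (p.2 + c) < p.1}
      = ENNReal.ofReal (s / (s + α * r) * rexp (-(α * r * c))) := by
  have := isProbabilityMeasure_expMeasure hr
  have := isProbabilityMeasure_expMeasure hs
  have hsection : ∀ y : ℝ, (fun x => (x, y)) ⁻¹' {p : ℝ × ℝ | α * (p.2 + c) < p.1}
      = Ioi (α * y + α * c) := fun y => by ext; simp [mul_add]
  rw [Measure.prod_apply_symm (measurableSet_lt (by fun_prop) measurable_fst)]
  simp_rw [hsection]
  rw [lintegral_expMeasure_Ioi_affine hr hs hα (by positivity)]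
  ring_nf

lemma prod_expMeasure_setOf_lt_inter_setOf_lt (hr : 0 < r) (hs : 0 < s) {α c : ℝ} (hα0 : 0 < α)
    (hα1 : α < 1) (hc : 0 ≤ c) :
    (expMeasure r).prod (expMeasure s)
        ({p | α * (p.2 + c) < p.1} ∩ {p | α * (p.1 + c) < p.2})
      = ENNReal.ofReal ((r / (r + α * s) + s / (s + α * r) - 1)
          * rexp (-(r + s) * (α * c / (1 - α)))) := by
  have := isProbabilityMeasure_expMeasure hr
  have := isProbabilityMeasure_expMeasure hs
  have h1α : 0 < 1 - α := by linarith
  set t₀ := α * c / (1 - α) with ht₀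
  have hsection : ∀ y : ℝ,
      (fun x => (x, y)) ⁻¹' ({p : ℝ × ℝ | α * (p.2 + c) < p.1} ∩ {p | α * (p.1 + c) < p.2})
        = Ioo (α * y + α * c) (α⁻¹ * y + -c) := fun y => by
    ext x
    simp only [mem_preimage, mem_inter_iff, mem_ofPred_eq, mem_Ioo, mul_add]
    refine and_congr_right fun _ => ?_
    rw [← sub_eq_add_neg, lt_sub_iff_add_lt, ← div_eq_inv_mul, lt_div_iff₀ hα0, mul_comm]
    ring_nf
  -- the section is nonempty exactly when `t₀ < y`
  have hgap : ∀ y : ℝ, α⁻¹ * y + -c - (α * y + α * c) = (1 + α) / α * (1 - α) * (y - t₀) :=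
    fun y => by rw [ht₀]; field_simp; ring
  have hk : 0 < (1 + α) / α * (1 - α) := by positivity
  have ht₀_nonneg : 0 ≤ t₀ := by positivity
  rw [Measure.prod_apply_symm ((measurableSet_lt (by fun_prop) measurable_fst).inter
    (measurableSet_lt (by fun_prop) measurable_snd))]
  simp_rw [hsection]
  rw [lintegral_measure_Ioo_eq_sub (by fun_prop) (t := t₀)
      (fun y hy => by nlinarith [hgap y]) (fun y hy => by nlinarith [hgap y]),
    setLIntegral_expMeasure_Ioi_affine hr hs hα0.le ht₀_nonneg (by positivity),
    setLIntegral_expMeasure_Ioi_affine hr hs (by positivity) ht₀_nonneg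
      (by nlinarith [hgap t₀]),
    ← ENNReal.ofReal_sub _ (by positivity)]
  have hexp₁ : -(r * (α * c)) - (s + α * r) * t₀ = -(r + s) * t₀ := by
    rw [ht₀]; field_simp; ring
  have hexp₂ : -(r * -c) - (s + α⁻¹ * r) * t₀ = -(r + s) * t₀ := by
    rw [ht₀]; field_simp; ring
  have hcoeff :
      s / (s + α * r) - s / (s + α⁻¹ * r) = r / (r + α * s) + s / (s + α * r) - 1 := by
    have : r + α * s ≠ 0 := by positivity
    field_simp
    ring
  rw [hexp₁, hexp₂, ← sub_mul, hcoeff]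

end TwoSensors

/-- For independent `X₁ ~ Exp(λ₁)`, `X₂ ~ Exp(λ₂)`, `α ∈ (0,1)` and
`σ² > 0`, the probability that neither packet is received is
`P(X₁ ≤ α(X₂+σ²) ∧ X₂ ≤ α(X₁+σ²)) = 1 − (λ₂/(λ₂+αλ₁))·exp(−αλ₁σ²)
  − (λ₁/(λ₁+αλ₂))·exp(−αλ₂σ²)
  + (λ₁/(λ₁+αλ₂) + λ₂/(λ₂+αλ₁) − 1)·exp(−(λ₁+λ₂)·ασ²/(1−α))`. -/
theorem stmt_11 {Ω : Type*} [MeasureTheory.MeasureSpace Ω]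
    (μ : Measure Ω) [IsProbabilityMeasure μ]
    (X1 X2 : Ω → ℝ) (hX1m : Measurable X1) (hX2m : Measurable X2)
    (l1 l2 : ℝ) (hl1 : 0 < l1) (hl2 : 0 < l2)
    (hX1 : Measure.map X1 μ = expMeasure l1)
    (hX2 : Measure.map X2 μ = expMeasure l2)
    (hindep : IndepFun X1 X2 μ)
    (α σ2 : ℝ) (hα : α ∈ Set.Ioo (0:ℝ) 1) (hσ2 : 0 < σ2) :
    μ {ω | X1 ω ≤ α * (X2 ω + σ2) ∧ X2 ω ≤ α * (X1 ω + σ2)}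
      = ENNReal.ofReal
          (1 - l2 / (l2 + α * l1) * rexp (-(α * l1 * σ2))
             - l1 / (l1 + α * l2) * rexp (-(α * l2 * σ2))
             + (l1 / (l1 + α * l2) + l2 / (l2 + α * l1) - 1)
               * rexp (-(l1 + l2) * (α * σ2 / (1 - α)))) := by
  obtain ⟨hα0, hα1⟩ := hα
  have := isProbabilityMeasure_expMeasure hl1
  have := isProbabilityMeasure_expMeasure hl2
  let A : Set (ℝ × ℝ) := {p | α * (p.2 + σ2) < p.1}
  let B : Set (ℝ × ℝ) := {p | α * (p.1 + σ2) < p.2}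
  have hA : MeasurableSet A := measurableSet_lt (by fun_prop) measurable_fst
  have hB : MeasurableSet B := measurableSet_lt (by fun_prop) measurable_snd
  have hlaw : μ {ω | X1 ω ≤ α * (X2 ω + σ2) ∧ X2 ω ≤ α * (X1 ω + σ2)}
      = (expMeasure l1).prod (expMeasure l2) (Aᶜ ∩ Bᶜ) := by
    rw [← hX1, ← hX2, ← (indepFun_iff_map_prod_eq_prod_map_map hX1m.aemeasurable
      hX2m.aemeasurable).mp hindep, Measure.map_apply (hX1m.prodMk hX2m) (hA.compl.inter hB.compl)]
    congr 1
    ext ω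
    simp [A, B]
  have hPB : (expMeasure l1).prod (expMeasure l2) B
      = ENNReal.ofReal (l1 / (l1 + α * l2) * rexp (-(α * l2 * σ2))) := by
    rw [← Measure.prod_swap, Measure.map_apply measurable_swap hB]
    exact prod_expMeasure_setOf_lt hl2 hl1 hα0.le hσ2.le
  have hcoeff : 0 ≤ l1 / (l1 + α * l2) + l2 / (l2 + α * l1) - 1 := by
    rw [div_add_div _ _ (by positivity) (by positivity), sub_nonneg, one_le_div (by positivity)]
    nlinarith [mul_pos (mul_pos hl1 hl2) (mul_pos (sub_pos.mpr hα1) (add_pos one_pos hα0))]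
  rw [hlaw, ← ofReal_measureReal, probReal_compl_inter_compl hA hB, measureReal_def,
    measureReal_def, measureReal_def, prod_expMeasure_setOf_lt hl1 hl2 hα0.le hσ2.le, hPB,
    prod_expMeasure_setOf_lt_inter_setOf_lt hl1 hl2 hα0 hα1 hσ2.le,
    ENNReal.toReal_ofReal (by positivity), ENNReal.toReal_ofReal (by positivity),
    ENNReal.toReal_ofReal (by positivity)]
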